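/- arXiv:2409.14005 — 2 statements merged into one kernel-verified Lean document; each statement's English description precedes it below -/
import Mathlib

section
/- Let Φ : ℝ⁴ → ℝ³ be a twice continuously differentiable map sending space-time computational coordinates (τ, ξ₁, ξ₂, ξ₃) to physical spatial coordinates (x, y, z). At each point let M be the 3×3 matrix of spatial partial derivatives, M i j = ∂Φᵢ/∂ξⱼ, and let V = ∂Φ/∂τ ∈ ℝ³ be the grid velocity. Then the three-dimensional geometric conservation law holds identically: ∂(det M)/∂τ = Σ_{j=1}^{3} ∂/∂ξⱼ [ (adjugate(M) · V)ⱼ ], where adjugate(M) · V denotes the matrix–vector product of the adjugate of M with V. -/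
/-- Partial derivative of `f : (Fin 4 → ℝ) → ℝ` in the `i`-th coordinate direction. -/
noncomputable def pd (i : Fin 4) (f : (Fin 4 → ℝ) → ℝ) (p : Fin 4 → ℝ) : ℝ :=
  fderiv ℝ f p (Pi.single i 1)

/-- Spatial Jacobian matrix `M i j = ∂Φᵢ/∂ξⱼ` of a space-time map
`Φ(τ, ξ₁, ξ₂, ξ₃)`, where coordinate `0` is `τ` and `j.succ` is `ξⱼ`. -/
noncomputable def spatialJac (Φ : (Fin 4 → ℝ) → (Fin 3 → ℝ)) (p : Fin 4 → ℝ) :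
    Matrix (Fin 3) (Fin 3) ℝ :=
  Matrix.of fun i j : Fin 3 => pd j.succ (fun q => Φ q i) p

/-- Grid velocity `V = ∂Φ/∂τ`. -/
noncomputable def gridVel (Φ : (Fin 4 → ℝ) → (Fin 3 → ℝ)) (p : Fin 4 → ℝ) :
    Fin 3 → ℝ :=
  fun i => pd 0 (fun q => Φ q i) p

/-!
Let `J` be the Jacobian of `Φ` along directions `e₁, …, eₙ` and `V = DΦ u` its derivative along a
further direction `u`. The rows of `Jᵀ` are the vectors `DΦ e_l`, and by Cramer's rule `(adj J · V)_j`
is the determinant of the same rows with `e_j` replaced by `u`. So the identity reads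
`∂_u det (DΦ ∘ e) = ∑_j ∂_{e_j} det (DΦ ∘ e[j := u])`. Differentiating the determinants row by row
gives terms containing `D²Φ(v, w)`. The terms differentiating row `j` on the right match the left
side by symmetry of `D²Φ`; the remaining terms, indexed by pairs `j ≠ l`, cancel in pairs
`(j, l) ↔ (l, j)`, which differ by a swap of two rows. This is `d (dΦ₁ ∧ ⋯ ∧ dΦₙ) = 0`.
-/

open Function Matrix

theorem Finset.sum_sum_erase_eq_zero_of_antisymm {ι M : Type*} [DecidableEq ι] [AddCommGroup M]
    (s : Finset ι) (T : ι → ι → M) (hT : ∀ i j, i ≠ j → T j i = -T i j) :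
    ∑ i ∈ s, ∑ j ∈ s.erase i, T i j = 0 := by
  rw [← Finset.sum_finset_product s.offDiag s (fun i => s.erase i) (by aesop)
    (f := fun x => T x.1 x.2)]
  refine Finset.sum_involution (fun x _ => x.swap) (fun x hx => ?_) (fun x hx _ h => ?_)
    (fun x hx => by simpa [and_left_comm, eq_comm] using hx) (fun x _ => x.swap_swap)
  · rw [Prod.fst_swap, Prod.snd_swap, hT _ _ (Finset.mem_offDiag.1 hx).2.2, add_neg_cancel]
  · exact (Finset.mem_offDiag.1 hx).2.2 (congrArg Prod.snd h)

namespace AlternatingMap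

variable {R M N ι : Type*} [Semiring R] [AddCommMonoid M] [Module R M] [AddCommGroup N]
  [Module R N] [DecidableEq ι]

theorem map_update_update_swap (f : M [⋀^ι]→ₗ[R] N) (x : ι → M) {i j : ι} (hij : i ≠ j)
    (a b : M) : f (update (update x i a) j b) = -f (update (update x i b) j a) := by
  rw [← f.map_swap _ hij]
  congr 1
  ext k
  rcases eq_or_ne k i with rfl | hki
  · simp [hij]
  rcases eq_or_ne k j with rfl | hkj
  · simp [hij]
  · simp [Equiv.swap_apply_of_ne_of_ne hki hkj, hki, hkj]

theorem sum_map_update_eq_sum_sum_map_update [Fintype ι] {E : Type*} (f : M [⋀^ι]→ₗ[R] N)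
    (D : E → M) (H : E → E → M) (hH : ∀ v w, H v w = H w v) (u : E) (e : ι → E) :
    ∑ l, f (update (fun k => D (e k)) l (H u (e l))) =
      ∑ j, ∑ l, f (update (fun k => D (update e j u k)) l (H (e j) (update e j u l))) := by
  set x : ι → M := fun k => D (e k)
  have hx : ∀ j, (fun k => D (update e j u k)) = update x j (D u) := fun j => comp_update D e j u
  have hsplit : ∀ j, ∑ l, f (update (fun k => D (update e j u k)) l (H (e j) (update e j u l))) =
      f (update x j (H u (e j))) +
        ∑ l ∈ Finset.univ.erase j, f (update (update x j (D u)) l (H (e j) (e l))) := by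
    intro j
    rw [← Finset.add_sum_erase _ _ (Finset.mem_univ j), hx, update_idem, update_self, hH]
    congr 1
    refine Finset.sum_congr rfl fun l hl => ?_
    rw [update_of_ne (Finset.ne_of_mem_erase hl)]
  rw [Finset.sum_congr rfl fun j _ => hsplit j, Finset.sum_add_distrib,
    Finset.sum_sum_erase_eq_zero_of_antisymm, add_zero]
  intro i j hij
  rw [update_comm hij.symm, f.map_update_update_swap _ hij, hH]

end AlternatingMap

variable {E F G : Type*} [NormedAddCommGroup E] [NormedSpace ℝ E] [NormedAddCommGroup F]
  [NormedSpace ℝ F] [NormedAddCommGroup G] [NormedSpace ℝ G] {ι : Type*} [Fintype ι]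
  [DecidableEq ι]

theorem fderiv_fderiv_apply {Φ : E → F} {p : E} (hΦ : DifferentiableAt ℝ (fderiv ℝ Φ) p)
    (v w : E) : fderiv ℝ (fun q => fderiv ℝ Φ q v) p w = fderiv ℝ (fderiv ℝ Φ) p w v := by
  rw [fderiv_clm_apply hΦ (differentiableAt_const v)]
  simp

theorem ContDiffAt.fderiv_continuousAlternatingMap_apply_fderiv (f : F [⋀^ι]→L[ℝ] G)
    {Φ : E → F} {p : E} (hΦ : ContDiffAt ℝ 2 Φ p) (d : ι → E) (w : E) :
    fderiv ℝ (fun q => f fun l => fderiv ℝ Φ q (d l)) p w =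
      ∑ l, f (update (fun k => fderiv ℝ Φ p (d k)) l (fderiv ℝ (fderiv ℝ Φ) p w (d l))) := by
  have hD : DifferentiableAt ℝ (fderiv ℝ Φ) p :=
    (hΦ.fderiv_right (m := 1) le_rfl).differentiableAt one_ne_zero
  rw [fderiv_continuousAlternatingMap_apply_apply (differentiableAt_const f)
    (fun l => hD.clm_apply (differentiableAt_const (d l)))]
  simp [fderiv_fderiv_apply hD]

theorem ContDiffAt.fderiv_continuousAlternatingMap_apply_fderiv_eq_sum (f : F [⋀^ι]→L[ℝ] G)
    {Φ : E → F} {p : E} (hΦ : ContDiffAt ℝ 2 Φ p) (u : E) (e : ι → E) :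
    fderiv ℝ (fun q => f fun l => fderiv ℝ Φ q (e l)) p u =
      ∑ j, fderiv ℝ (fun q => f fun l => fderiv ℝ Φ q (update e j u l)) p (e j) := by
  simp only [hΦ.fderiv_continuousAlternatingMap_apply_fderiv]
  exact f.toAlternatingMap.sum_map_update_eq_sum_sum_map_update (fderiv ℝ Φ p) _
    (hΦ.isSymmSndFDerivAt (by simp)) u e

noncomputable def Matrix.detRowContinuousAlternating : (ι → ℝ) [⋀^ι]→L[ℝ] ℝ :=
  { detRowAlternating with cont := continuous_id.matrix_det }

noncomputable def jacobianAlong (Φ : E → ι → ℝ) (e : ι → E) (q : E) : Matrix ι ι ℝ :=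
  of fun i j => fderiv ℝ Φ q (e j) i

theorem det_jacobianAlong (Φ : E → ι → ℝ) (e : ι → E) (q : E) :
    (jacobianAlong Φ e q).det = detRowContinuousAlternating fun l => fderiv ℝ Φ q (e l) := by
  rw [← det_transpose]
  rfl

theorem adjugate_jacobianAlong_mulVec (Φ : E → ι → ℝ) (e : ι → E) (q u : E) (j : ι) :
    ((jacobianAlong Φ e q).adjugate *ᵥ fderiv ℝ Φ q u) j =
      (jacobianAlong Φ (update e j u) q).det := by
  rw [← cramer_eq_adjugate_mulVec, cramer_apply]
  congr 1
  ext i l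
  rcases eq_or_ne l j with rfl | hlj
  · simp [jacobianAlong]
  · simp [jacobianAlong, hlj]

theorem ContDiffAt.fderiv_det_jacobianAlong_eq_sum {Φ : E → ι → ℝ} {p : E}
    (hΦ : ContDiffAt ℝ 2 Φ p) (u : E) (e : ι → E) :
    fderiv ℝ (fun q => (jacobianAlong Φ e q).det) p u =
      ∑ j, fderiv ℝ (fun q => ((jacobianAlong Φ e q).adjugate *ᵥ fderiv ℝ Φ q u) j) p (e j) := by
  simp only [det_jacobianAlong, adjugate_jacobianAlong_mulVec]
  exact hΦ.fderiv_continuousAlternatingMap_apply_fderiv_eq_sum _ u e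

theorem pd_apply {κ : Type*} [Fintype κ] {Φ : (Fin 4 → ℝ) → κ → ℝ} {p : Fin 4 → ℝ}
    (hΦ : DifferentiableAt ℝ Φ p) (i : Fin 4) (k : κ) :
    pd i (fun q => Φ q k) p = fderiv ℝ Φ p (Pi.single i 1) k := by
  rw [pd, (hasFDerivAt_pi'.1 hΦ.hasFDerivAt k).fderiv]
  rfl

/-- The 3D geometric conservation law:
`∂(det M)/∂τ = Σⱼ ∂/∂ξⱼ [(adjugate(M) · V)ⱼ]` for a `C²` space-time map `Φ`. -/
theorem gcl_3d (Φ : (Fin 4 → ℝ) → (Fin 3 → ℝ)) (hΦ : ContDiff ℝ 2 Φ) :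
    ∀ p : Fin 4 → ℝ,
      pd 0 (fun q => (spatialJac Φ q).det) p
        = ∑ j : Fin 3,
            pd j.succ (fun q => (Matrix.mulVec (spatialJac Φ q).adjugate (gridVel Φ q)) j) p := by
  intro p
  have hdiff : Differentiable ℝ Φ := hΦ.differentiable (by norm_num)
  have hJ : spatialJac Φ = jacobianAlong Φ fun j => Pi.single j.succ 1 := by
    funext q
    ext i j
    exact pd_apply (hdiff q) _ _
  have hV : gridVel Φ = fun q => fderiv ℝ Φ q (Pi.single 0 1) := by
    funext q i
    exact pd_apply (hdiff q) _ _
  rw [hJ, hV]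
  exact hΦ.contDiffAt.fderiv_det_jacobianAlong_eq_sum _ _
end

section
/- Let k ≥ 0, let x, y ∈ ℝ[ξ, η] have degree at most 1 in each of ξ and η (bilinear), and let f, g ∈ ℝ[ξ, η] have degree at most k in each variable. Then the transformed local flux f̃ = (∂y/∂η)·f − (∂x/∂η)·g has degree at most k+1 in ξ and at most k in η, and its derivative ∂f̃/∂ξ has degree at most k in each of ξ and η. Symmetrically, g̃ = −(∂y/∂ξ)·f + (∂x/∂ξ)·g has degree at most k in ξ and at most k+1 in η, and ∂g̃/∂η has degree at most k in each variable. -/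
/-!
Partial differentiation in one variable lowers the degree in that variable by one and does
not raise the degree in any other variable, while degrees add under multiplication. Since
`x, y` are bilinear, `x_η, y_η` are constant in `η` and of degree at most one in `ξ`, so
`f̃ = y_η f − x_η g` lies in `P^{k+1}(ξ) ⊗ P^k(η)`, and `∂/∂ξ` brings it back into `Q^k`;
the statement for `g̃` is the same with the roles of `ξ` and `η` exchanged.
-/

open MvPolynomial

namespace MvPolynomial

variable {σ R : Type*}

section CommSemiring

variable [CommSemiring R]

theorem add_single_mem_support_of_mem_support_pderiv {i : σ} {p : MvPolynomial σ R}
    {m : σ →₀ ℕ} (h : m ∈ (pderiv i p).support) : m + Finsupp.single i 1 ∈ p.support := by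
  rw [mem_support_iff, coeff_pderiv] at h
  exact mem_support_iff.2 (left_ne_zero_of_mul h)

theorem degreeOf_pderiv_le (i j : σ) (p : MvPolynomial σ R) :
    degreeOf j (pderiv i p) ≤ degreeOf j p := by
  refine degreeOf_le_iff.2 fun m hm => ?_
  calc m j ≤ (m + Finsupp.single i 1 : σ →₀ ℕ) j := by simp
    _ ≤ degreeOf j p :=
      monomial_le_degreeOf j (add_single_mem_support_of_mem_support_pderiv hm)

theorem degreeOf_pderiv_self_le (i : σ) (p : MvPolynomial σ R) :
    degreeOf i (pderiv i p) ≤ degreeOf i p - 1 := by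
  refine degreeOf_le_iff.2 fun m hm => ?_
  have hle := monomial_le_degreeOf i (add_single_mem_support_of_mem_support_pderiv hm)
  rw [Finsupp.add_apply, Finsupp.single_eq_same] at hle
  omega

theorem degreeOf_pderiv_self_le_of_le_succ {i : σ} {p : MvPolynomial σ R} {n : ℕ}
    (h : degreeOf i p ≤ n + 1) : degreeOf i (pderiv i p) ≤ n :=
  (degreeOf_pderiv_self_le i p).trans (by omega)

end CommSemiring

theorem degreeOf_mul_sub_mul_le [CommRing R] (i : σ) {a b f g : MvPolynomial σ R} {m n : ℕ}
    (ha : degreeOf i a ≤ m) (hb : degreeOf i b ≤ m)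
    (hf : degreeOf i f ≤ n) (hg : degreeOf i g ≤ n) :
    degreeOf i (a * f - b * g) ≤ m + n := by
  refine (degreeOf_sub_le i _ _).trans (max_le ?_ ?_)
  · exact (degreeOf_mul_le i a f).trans (add_le_add ha hf)
  · exact (degreeOf_mul_le i b g).trans (add_le_add hb hg)

end MvPolynomial

/-- Per-variable degree bounds for the transformed local fluxes on a bilinear
element.  Variables: `0` is `ξ`, `1` is `η`.  With `x, y` bilinear and `f, g` of
degree at most `k` in each variable, `f̃ = y_η f − x_η g` lies in
`P^{k+1}(ξ) ⊗ P^k(η)` and `∂f̃/∂ξ ∈ Q^k`; symmetrically `g̃ = −y_ξ f + x_ξ g`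
lies in `P^k(ξ) ⊗ P^{k+1}(η)` and `∂g̃/∂η ∈ Q^k`. -/
theorem local_flux_degrees (k : ℕ) (x y f g : MvPolynomial (Fin 2) ℝ)
    (hx0 : degreeOf 0 x ≤ 1) (hx1 : degreeOf 1 x ≤ 1)
    (hy0 : degreeOf 0 y ≤ 1) (hy1 : degreeOf 1 y ≤ 1)
    (hf0 : degreeOf 0 f ≤ k) (hf1 : degreeOf 1 f ≤ k)
    (hg0 : degreeOf 0 g ≤ k) (hg1 : degreeOf 1 g ≤ k) :
    (degreeOf 0 (pderiv 1 y * f - pderiv 1 x * g) ≤ k + 1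
      ∧ degreeOf 1 (pderiv 1 y * f - pderiv 1 x * g) ≤ k
      ∧ degreeOf 0 (pderiv 0 (pderiv 1 y * f - pderiv 1 x * g)) ≤ k
      ∧ degreeOf 1 (pderiv 0 (pderiv 1 y * f - pderiv 1 x * g)) ≤ k)
    ∧ (degreeOf 0 (-(pderiv 0 y) * f + pderiv 0 x * g) ≤ k
      ∧ degreeOf 1 (-(pderiv 0 y) * f + pderiv 0 x * g) ≤ k + 1
      ∧ degreeOf 0 (pderiv 1 (-(pderiv 0 y) * f + pderiv 0 x * g)) ≤ k
      ∧ degreeOf 1 (pderiv 1 (-(pderiv 0 y) * f + pderiv 0 x * g)) ≤ k) := by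
  have hG : -(pderiv 0 y) * f + pderiv 0 x * g = pderiv 0 x * g - pderiv 0 y * f := by ring
  rw [hG]
  have hF0 : degreeOf 0 (pderiv 1 y * f - pderiv 1 x * g) ≤ k + 1 :=
    (degreeOf_mul_sub_mul_le 0 ((degreeOf_pderiv_le 1 0 y).trans hy0)
      ((degreeOf_pderiv_le 1 0 x).trans hx0) hf0 hg0).trans_eq (add_comm 1 k)
  have hF1 : degreeOf 1 (pderiv 1 y * f - pderiv 1 x * g) ≤ k :=
    (degreeOf_mul_sub_mul_le 1 (degreeOf_pderiv_self_le_of_le_succ (n := 0) hy1)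
      (degreeOf_pderiv_self_le_of_le_succ (n := 0) hx1) hf1 hg1).trans_eq (zero_add k)
  have hG0 : degreeOf 0 (pderiv 0 x * g - pderiv 0 y * f) ≤ k :=
    (degreeOf_mul_sub_mul_le 0 (degreeOf_pderiv_self_le_of_le_succ (n := 0) hx0)
      (degreeOf_pderiv_self_le_of_le_succ (n := 0) hy0) hg0 hf0).trans_eq (zero_add k)
  have hG1 : degreeOf 1 (pderiv 0 x * g - pderiv 0 y * f) ≤ k + 1 :=
    (degreeOf_mul_sub_mul_le 1 ((degreeOf_pderiv_le 0 1 x).trans hx1)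
      ((degreeOf_pderiv_le 0 1 y).trans hy1) hg1 hf1).trans_eq (add_comm 1 k)
  exact ⟨⟨hF0, hF1, degreeOf_pderiv_self_le_of_le_succ hF0, (degreeOf_pderiv_le 0 1 _).trans hF1⟩,
    ⟨hG0, hG1, (degreeOf_pderiv_le 1 0 _).trans hG0, degreeOf_pderiv_self_le_of_le_succ hG1⟩⟩
end
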